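/- arXiv:0710.2352 — 2 statements merged into one kernel-verified Lean document; each statement's English description precedes it below -/
import Mathlib

section
/- Let n be a positive integer and let s_0 > s_1 > … > s_{n−1} > 0 be reals. Equip ω^n (the set of sequences of natural numbers of length n) with the ultrametric d(x,y) = s_{Δ(x,y)} for x ≠ y, where Δ(x,y) is the length of the longest common initial segment of x and y. Then for all A, B ⊆ ω^n, the metric spaces A and B are isometric if and only if the trees A↓ and B↓ are isomorphic, where A↓ = {a↾k : a ∈ A, k ≤ n} is ordered by the initial-segment relation. -/
/-- `Q` is isomorphic to `P` as a tree (subsets of `ω^{≤n}`, ordered by the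
initial-segment relation). -/
def TreeIso (P Q : Set (List ℕ)) : Prop :=
  ∃ e : P → List ℕ, Function.Injective e ∧ Set.range e = Q ∧
    ∀ a b : P, ((a : List ℕ) <+: (b : List ℕ) ↔ e a <+: e b)

/-- `A↓`: the set of all initial segments of elements of `A ⊆ ω^n`. -/
def down (n : ℕ) (A : Set (List ℕ)) : Set (List ℕ) :=
  {t | ∃ a ∈ A, ∃ k ≤ n, t = a.take k}

/-- `Δ(x,y)`: the length of the longest common initial segment of `x, y`. -/
def lcp (x y : List ℕ) : ℕ := ((x.zip y).takeWhile (fun p => p.1 == p.2)).length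

/-- The ultrametric on `ω^n` given by `d(x,y) = s (Δ(x,y))` for `x ≠ y`. -/
noncomputable def treeDist (s : ℕ → ℝ) (x y : List ℕ) : ℝ :=
  if x = y then 0 else s (lcp x y)

/-!
The tree `A↓` remembers exactly the function `Δ` on `A`: two points of `A` have a common
prefix of length `k` iff `k ≤ Δ`, and since a tree isomorphism between prefix-closed sets
preserves the length of a node (a node of length `m` has exactly `m + 1` predecessors),
it transports common prefixes of every length. Conversely a `Δ`-preserving bijection
`A → B` extends to `A↓` by `a↾k ↦ e(a)↾k`. Since `s` is injective on `[0, n)` and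
`Δ(x, y) < n` for `x ≠ y`, isometries `A → B` are exactly the `Δ`-preserving bijections.
-/

open List

section Prefix

variable {α : Type*}

def IsPrefixClosed (P : Set (List α)) : Prop :=
  ∀ ⦃t⦄, t ∈ P → ∀ ⦃u⦄, u <+: t → u ∈ P

lemma ncard_setOf_prefix (t : List α) : {u | u <+: t}.ncard = t.length + 1 := by
  have himage : {u | u <+: t} = (fun k => t.take k) '' Set.Iic t.length := by
    ext u
    simp only [Set.mem_ofPred_eq, Set.mem_image, Set.mem_Iic]
    constructor
    · intro h
      exact ⟨u.length, h.length_le, (prefix_iff_eq_take.mp h).symm⟩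
    · rintro ⟨k, -, rfl⟩
      exact take_prefix k t
  have hinj : Set.InjOn (fun k => t.take k) (Set.Iic t.length) := by
    intro i hi j hj h
    simpa [min_eq_left (Set.mem_Iic.mp hi), min_eq_left (Set.mem_Iic.mp hj)] using
      congrArg length h
  rw [himage, hinj.ncard_image, Set.ncard_eq_toFinset_card']
  simp

lemma prefix_iff_of_prefix {u t a : List α} (ht : t <+: a) :
    u <+: t ↔ u <+: a ∧ u.length ≤ t.length :=
  ⟨fun h => ⟨h.trans ht, h.length_le⟩, fun h => prefix_of_prefix_length_le h.1 ht h.2⟩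

lemma injective_of_prefix_iff {P : Set (List α)} {e : P → List α}
    (he : ∀ a b : P, (a : List α) <+: b ↔ e a <+: e b) : Function.Injective e := fun a b h =>
  have hab := (he a b).mpr (h ▸ prefix_rfl)
  Subtype.ext (hab.eq_of_length (le_antisymm hab.length_le ((he b a).mpr (h ▸ prefix_rfl)).length_le))

lemma length_eq_of_prefix_iff {P Q : Set (List α)} (hP : IsPrefixClosed P)
    (hQ : IsPrefixClosed Q) {e : P → List α} (hrange : Set.range e = Q)
    (he : ∀ a b : P, (a : List α) <+: b ↔ e a <+: e b) (t : P) :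
    (e t).length = (t : List α).length := by
  let below : Set P := Subtype.val ⁻¹' {u | u <+: t}
  have hsrc : Subtype.val '' below = {u | u <+: t} := by
    rw [Subtype.image_preimage_coe]
    exact Set.inter_eq_right.mpr fun u hu => hP t.2 hu
  have htgt : e '' below = {v | v <+: e t} := by
    ext v
    refine ⟨?_, fun hv => ?_⟩
    · rintro ⟨u, hu, rfl⟩
      exact (he u t).mp hu
    · obtain ⟨u, rfl⟩ : v ∈ Set.range e := hrange ▸ hQ (hrange ▸ Set.mem_range_self t) hv
      exact ⟨u, (he u t).mpr hv, rfl⟩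
  have hcard : {u | u <+: (t : List α)}.ncard = {v | v <+: e t}.ncard := by
    rw [← hsrc, ← htgt, Set.ncard_image_of_injective _ Subtype.val_injective,
      Set.ncard_image_of_injective _ (injective_of_prefix_iff he)]
  simpa only [ncard_setOf_prefix, Nat.add_right_cancel_iff] using hcard.symm

end Prefix

section CommonPrefix

lemma lcp_cons (a b : ℕ) (x y : List ℕ) :
    lcp (a :: x) (b :: y) = if a = b then lcp x y + 1 else 0 := by
  by_cases h : a = b <;> simp [lcp, h]

lemma le_lcp_iff {x y : List ℕ} {k : ℕ} :
    k ≤ lcp x y ↔ ∃ u, u <+: x ∧ u <+: y ∧ u.length = k := by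
  induction x generalizing y k with
  | nil => simp [lcp, eq_comm]
  | cons a x ih =>
    cases y with
    | nil => simp [lcp, eq_comm]
    | cons b y =>
      cases k with
      | zero => exact ⟨fun _ => ⟨[], nil_prefix, nil_prefix, rfl⟩, fun _ => Nat.zero_le _⟩
      | succ k =>
        rw [lcp_cons]
        split_ifs with hab
        · subst hab
          simp only [Nat.add_le_add_iff_right, ih]
          constructor
          · rintro ⟨u, hx, hy, rfl⟩
            exact ⟨a :: u, cons_prefix_cons.mpr ⟨rfl, hx⟩, cons_prefix_cons.mpr ⟨rfl, hy⟩, rfl⟩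
          · rintro ⟨_ | ⟨c, u⟩, hx, hy, hlen⟩
            · simp at hlen
            · exact ⟨u, (cons_prefix_cons.mp hx).2, (cons_prefix_cons.mp hy).2,
                Nat.succ_injective hlen⟩
        · simp only [Nat.le_zero, Nat.add_one_ne_zero, false_iff, not_exists, not_and]
          rintro (_ | ⟨c, u⟩) hx hy hlen
          · simp at hlen
          · exact hab ((cons_prefix_cons.mp hx).1.symm.trans (cons_prefix_cons.mp hy).1)

lemma take_eq_take_of_le_lcp {x y : List ℕ} {k : ℕ} (h : k ≤ lcp x y) : x.take k = y.take k := by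
  obtain ⟨u, hx, hy, rfl⟩ := le_lcp_iff.mp h
  rw [← prefix_iff_eq_take.mp hx, ← prefix_iff_eq_take.mp hy]

lemma prefix_iff_length_le_lcp {t x y : List ℕ} (ht : t <+: x) : t <+: y ↔ t.length ≤ lcp x y := by
  refine ⟨fun hy => le_lcp_iff.mpr ⟨t, ht, hy, rfl⟩, fun h => ?_⟩
  obtain ⟨u, hx, hy, hlen⟩ := le_lcp_iff.mp h
  rwa [(prefix_of_prefix_length_le ht hx hlen.ge).eq_of_length hlen.symm]

lemma lcp_le_length_left (x y : List ℕ) : lcp x y ≤ x.length := by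
  obtain ⟨u, hx, -, hlen⟩ := le_lcp_iff.mp (le_refl (lcp x y))
  exact hlen ▸ hx.length_le

lemma lcp_self (x : List ℕ) : lcp x x = x.length :=
  le_antisymm (lcp_le_length_left x x) (le_lcp_iff.mpr ⟨x, prefix_rfl, prefix_rfl, rfl⟩)

lemma lcp_lt_length {x y : List ℕ} (hlen : x.length = y.length) (hne : x ≠ y) :
    lcp x y < x.length := by
  refine (lcp_le_length_left x y).lt_of_ne fun h => hne ?_
  obtain ⟨u, hx, hy, hu⟩ := le_lcp_iff.mp h.ge
  exact (hx.eq_of_length hu).symm.trans (hy.eq_of_length (hu.trans hlen))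

lemma treeDist_eq_treeDist_iff {n : ℕ} {s : ℕ → ℝ} (hs : StrictAntiOn s (Set.Iio n))
    {x y x' y' : List ℕ} (hx : x.length = n) (hy : y.length = n) (hx' : x'.length = n)
    (hy' : y'.length = n) (h : x' = y' ↔ x = y) :
    treeDist s x' y' = treeDist s x y ↔ lcp x' y' = lcp x y := by
  by_cases hxy : x = y
  · subst hxy
    obtain rfl := h.mpr rfl
    simp [treeDist, lcp_self, hx, hx']
  · have hxy' : x' ≠ y' := mt h.mp hxy
    rw [treeDist, treeDist, if_neg hxy, if_neg hxy']
    exact hs.injOn.eq_iff (hx' ▸ lcp_lt_length (hx'.trans hy'.symm) hxy')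
      (hx ▸ lcp_lt_length (hx.trans hy.symm) hxy)

lemma lcp_eq_of_prefix_iff {P Q : Set (List ℕ)} (hP : IsPrefixClosed P) (hQ : IsPrefixClosed Q)
    {e : P → List ℕ} (hrange : Set.range e = Q)
    (he : ∀ a b : P, (a : List ℕ) <+: b ↔ e a <+: e b) (a b : P) :
    lcp (e a) (e b) = lcp a b := by
  have hlen := length_eq_of_prefix_iff hP hQ hrange he
  refine eq_of_forall_le_iff fun k => ?_
  simp only [le_lcp_iff]
  constructor
  · rintro ⟨v, hva, hvb, rfl⟩
    obtain ⟨u, rfl⟩ : v ∈ Set.range e := hrange ▸ hQ (hrange ▸ Set.mem_range_self a) hva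
    exact ⟨u, (he u a).mpr hva, (he u b).mpr hvb, (hlen u).symm⟩
  · rintro ⟨u, hua, hub, rfl⟩
    let u' : P := ⟨u, hP a.2 hua⟩
    exact ⟨e u', (he u' a).mp hua, (he u' b).mp hub, hlen u'⟩

end CommonPrefix

section Down

variable {n : ℕ} {A B : Set (List ℕ)}

lemma mem_down_iff (hA : ∀ a ∈ A, a.length = n) {t : List ℕ} :
    t ∈ down n A ↔ ∃ a ∈ A, t <+: a := by
  constructor
  · rintro ⟨a, ha, k, -, rfl⟩
    exact ⟨a, ha, take_prefix k a⟩
  · rintro ⟨a, ha, hta⟩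
    exact ⟨a, ha, t.length, hA a ha ▸ hta.length_le, prefix_iff_eq_take.mp hta⟩

lemma isPrefixClosed_down (hA : ∀ a ∈ A, a.length = n) : IsPrefixClosed (down n A) := by
  intro t ht u hut
  obtain ⟨a, ha, hta⟩ := (mem_down_iff hA).mp ht
  exact (mem_down_iff hA).mpr ⟨a, ha, hut.trans hta⟩

lemma mem_of_mem_down (hA : ∀ a ∈ A, a.length = n) {t : List ℕ} (ht : t ∈ down n A)
    (hlen : t.length = n) : t ∈ A := by
  obtain ⟨a, ha, hta⟩ := (mem_down_iff hA).mp ht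
  rwa [hta.eq_of_length (hlen.trans (hA a ha).symm)]

lemma exists_lcp_eq_of_treeIso (hA : ∀ a ∈ A, a.length = n) (hB : ∀ b ∈ B, b.length = n)
    (h : TreeIso (down n A) (down n B)) :
    ∃ e : A → List ℕ, Function.Injective e ∧ Set.range e = B ∧
      ∀ a b : A, lcp (e a) (e b) = lcp a b := by
  obtain ⟨E, -, hrange, hE⟩ := h
  have hlen := length_eq_of_prefix_iff (isPrefixClosed_down hA) (isPrefixClosed_down hB) hrange hE
  let ι : A → down n A := fun a => ⟨a, (mem_down_iff hA).mpr ⟨a, a.2, prefix_rfl⟩⟩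
  refine ⟨fun a => E (ι a), fun a b hab => ?_, ?_, fun a b =>
    lcp_eq_of_prefix_iff (isPrefixClosed_down hA) (isPrefixClosed_down hB) hrange hE (ι a) (ι b)⟩
  · exact Subtype.ext (congrArg Subtype.val (injective_of_prefix_iff hE hab) :)
  · ext b
    constructor
    · rintro ⟨a, rfl⟩
      exact mem_of_mem_down hB (hrange ▸ Set.mem_range_self _) ((hlen _).trans (hA a a.2))
    · intro hb
      obtain ⟨t, rfl⟩ : b ∈ Set.range E :=
        hrange ▸ (mem_down_iff hB).mpr ⟨b, hb, prefix_rfl⟩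
      exact ⟨⟨t, mem_of_mem_down hA t.2 ((hlen t).symm.trans (hB _ hb))⟩, rfl⟩

lemma treeIso_down_of_lcp_eq (hA : ∀ a ∈ A, a.length = n) (hB : ∀ b ∈ B, b.length = n)
    (e : A → List ℕ) (hrange : Set.range e = B) (hlcp : ∀ a b : A, lcp (e a) (e b) = lcp a b) :
    TreeIso (down n A) (down n B) := by
  have hext (t : down n A) : ∃ a : A, (t : List ℕ) <+: a := by
    obtain ⟨a, ha, hta⟩ := (mem_down_iff hA).mp t.2
    exact ⟨⟨a, ha⟩, hta⟩
  choose ext hext using hext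
  have hlen_e (a : A) : (e a).length = n := hB _ (hrange ▸ Set.mem_range_self a)
  let F : down n A → List ℕ := fun t => (e (ext t)).take (t : List ℕ).length
  have hF (t : down n A) : (F t).length = (t : List ℕ).length := by
    simpa [F, hlen_e, ← hA _ (ext t).2] using (hext t).length_le
  have hFe (t : down n A) (a : A) (hta : (t : List ℕ) <+: a) : F t = (e a).take (t : List ℕ).length :=
    take_eq_take_of_le_lcp ((hlcp _ _).symm ▸ (prefix_iff_length_le_lcp (hext t)).mp hta)
  have hpre (t t' : down n A) : (t : List ℕ) <+: t' ↔ F t <+: F t' := by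
    rw [prefix_iff_of_prefix (hext t'), prefix_iff_length_le_lcp (hext t),
      prefix_iff_of_prefix (take_prefix _ _), prefix_iff_length_le_lcp (take_prefix _ _),
      hlcp, hF, hF]
  refine ⟨F, injective_of_prefix_iff hpre, ?_, hpre⟩
  ext v
  constructor
  · rintro ⟨t, rfl⟩
    exact (isPrefixClosed_down hB) ((mem_down_iff hB).mpr ⟨_, hrange ▸ Set.mem_range_self _,
      prefix_rfl⟩) (take_prefix _ _)
  · rintro ⟨b, hb, k, hk, rfl⟩
    obtain ⟨a, rfl⟩ : b ∈ Set.range e := hrange ▸ hb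
    have hk' : (a : List ℕ).take k ∈ down n A := ⟨a, a.2, k, hk, rfl⟩
    refine ⟨⟨_, hk'⟩, (hFe _ a (take_prefix _ _)).trans ?_⟩
    rw [length_take, hA _ a.2, min_eq_left hk]

lemma treeIso_down_iff (hA : ∀ a ∈ A, a.length = n) (hB : ∀ b ∈ B, b.length = n) :
    TreeIso (down n A) (down n B) ↔ ∃ e : A → List ℕ, Function.Injective e ∧
      Set.range e = B ∧ ∀ a b : A, lcp (e a) (e b) = lcp a b :=
  ⟨exists_lcp_eq_of_treeIso hA hB, fun ⟨e, _, hrange, hlcp⟩ =>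
    treeIso_down_of_lcp_eq hA hB e hrange hlcp⟩

end Down

theorem stmt14_general (n : ℕ) (s : ℕ → ℝ)
    (hanti : ∀ i j : ℕ, i < j → j < n → s j < s i)
    (A B : Set (List ℕ)) (hA : ∀ a ∈ A, a.length = n)
    (hB : ∀ b ∈ B, b.length = n) :
    (∃ e : A → List ℕ, Function.Injective e ∧ Set.range e = B ∧
      ∀ a b : A, treeDist s (e a) (e b) = treeDist s (a : List ℕ) (b : List ℕ)) ↔
    TreeIso (down n A) (down n B) := by
  have hs : StrictAntiOn s (Set.Iio n) := fun i _ j hj hij => hanti i j hij hj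
  rw [treeIso_down_iff hA hB]
  refine exists_congr fun e => and_congr_right fun he => and_congr_right fun hrange =>
    forall₂_congr fun a b => ?_
  have hlen (a : A) : (e a).length = n := hB _ (hrange ▸ Set.mem_range_self a)
  exact treeDist_eq_treeDist_iff hs (hA _ a.2) (hA _ b.2) (hlen a) (hlen b)
    (he.eq_iff.trans Subtype.ext_iff)

/-- For reals `s 0 > s 1 > … > s (n-1) > 0` and
`A, B ⊆ ω^n` with the metric `d(x,y) = s (Δ(x,y))`, `A` and `B` are isometric
iff the trees `A↓` and `B↓` are isomorphic. -/
theorem stmt14 (n : ℕ) (hn : 0 < n) (s : ℕ → ℝ)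
    (hanti : ∀ i j : ℕ, i < j → j < n → s j < s i)
    (hpos : ∀ i : ℕ, i < n → 0 < s i)
    (A B : Set (List ℕ)) (hA : ∀ a ∈ A, a.length = n)
    (hB : ∀ b ∈ B, b.length = n) :
    (∃ e : A → List ℕ, Function.Injective e ∧ Set.range e = B ∧
      ∀ a b : A, treeDist s (e a) (e b) = treeDist s (a : List ℕ) (b : List ℕ)) ↔
    TreeIso (down n A) (down n B) :=
  stmt14_general n s hanti A B hA hB
end

section
/- Let S ⊆ (0,∞) be a countable set of positive reals and let M be a countable metric space such that (i) the finite metric subspaces of M are, up to isometry, exactly the finite ultrametric spaces all of whose nonzero distances lie in S, and (ii) M is ultrahomogeneous, i.e., every isometry between two finite subsets of M extends to a surjective isometry of M onto itself. Then M is isometric to Q_S. -/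
/-- The ultrametric Urysohn space with distances in `S`, realized as the
set of finitely supported functions from `S` to `ℕ`. -/
def QS (S : Set ℝ) : Type := {x : S → ℕ // (Function.support x).Finite}

/-- The ultrametric on `QS S`: the largest `s ∈ S` at which `x` and `y`
differ, and `0` if `x = y` (the supremum of the empty set of reals is `0`). -/
noncomputable def qdist (S : Set ℝ) (x y : QS S) : ℝ :=
  sSup (Subtype.val '' {s : S | x.1 s ≠ y.1 s})

/-- `Y ⊆ QS S'` is an isometric copy of `X ⊆ QS S`. -/
def IsCopyIn (S S' : Set ℝ) (X : Set (QS S)) (Y : Set (QS S')) : Prop :=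
  ∃ e : X → QS S', Function.Injective e ∧ Set.range e = Y ∧
    ∀ a b : X, qdist S' (e a) (e b) = qdist S a.1 b.1

/-- `X` is an isometric copy of `QS S` inside `QS S`. -/
def IsCopyOfQS (S : Set ℝ) (X : Set (QS S)) : Prop :=
  ∃ e : QS S → QS S, Function.Injective e ∧ Set.range e = X ∧
    ∀ x y, qdist S (e x) (e y) = qdist S x y

/-- The reverse order `>` well-orders `S`: every nonempty subset of `S`
has a greatest element. -/
def RevWellOrdered (S : Set ℝ) : Prop :=
  ∀ T ⊆ S, T.Nonempty → ∃ m ∈ T, ∀ t ∈ T, t ≤ m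

/-- `b` is a metric ball of `QS S` with radius `r ∈ S ∪ {0}`. -/
def IsBall (S : Set ℝ) (b : Set (QS S)) (r : ℝ) : Prop :=
  (r ∈ S ∨ r = 0) ∧ ∃ x : QS S, b = {y | qdist S x y ≤ r}

/-- `r⁻`: the greatest element of `S` below `r` (and `0` if there is none). -/
noncomputable def rminus (S : Set ℝ) (r : ℝ) : ℝ := sSup {t | t ∈ S ∧ t < r}

/-- `A` is small in the ball `b` of radius `r`. -/
def SmallIn (S : Set ℝ) (A b : Set (QS S)) (r : ℝ) : Prop :=
  (r = 0 ∧ A ∩ b = ∅) ∨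
  (0 < r ∧ ∃ F : Finset (QS S), A ∩ b ⊆ ⋃ c ∈ F, {y | qdist S c y ≤ rminus S r})

/-- `χ` admits at most `l` values on copies of `X` inside a copy of `QS S'`,
for every coloring with `k` colors. -/
def BRDbound (S S' : Set ℝ) (X : Set (QS S)) (l : ℕ) : Prop :=
  ∀ k : ℕ, 0 < k → ∀ χ : Set (QS S') → Fin k,
    ∃ Q : Set (QS S'), IsCopyOfQS S' Q ∧
      (χ '' {Y | IsCopyIn S S' X Y ∧ Y ⊆ Q}).ncard ≤ l

/-- `X ⊆ QS S` has big Ramsey degree `l` in `U_{S'}`. -/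
def HasBigRamseyDegree (S S' : Set ℝ) (X : Set (QS S)) (l : ℕ) : Prop :=
  IsLeast {m : ℕ | 0 < m ∧ BRDbound S S' X m} l

/-!
Both `M` and `Q_S` are countable ultrametric spaces with distances in `S` having the one-point
extension property, so a back-and-forth argument builds an isometry between them. For `Q_S` the
extension is explicit: to add a point at distance `r = d(m, x₀)` from its nearest neighbour `x₀`
among the points already matched, change the image of `x₀` at the coordinate `r` to a fresh value.
For `M` the extension comes from universality followed by ultrahomogeneity.
-/

section BackAndForth

variable {α β : Type*} (R : α × β → α × β → Prop)

def Coherent (l : List (α × β)) : Prop :=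
  ∀ p ∈ l, ∀ q ∈ l, R p q

theorem coherent_nil : Coherent R [] := by
  simp [Coherent]

theorem exists_coherent_of_back_and_forth [Countable α] [Countable β] [Nonempty α] [Nonempty β]
    (forth : ∀ l, Coherent R l → ∀ a, ∃ b, Coherent R ((a, b) :: l))
    (back : ∀ l, Coherent R l → ∀ b, ∃ a, Coherent R ((a, b) :: l)) :
    ∃ G : Set (α × β), (∀ a, ∃ b, (a, b) ∈ G) ∧ (∀ b, ∃ a, (a, b) ∈ G) ∧
      ∀ p ∈ G, ∀ q ∈ G, R p q := by
  obtain ⟨a, ha⟩ := exists_surjective_nat α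
  obtain ⟨b, hb⟩ := exists_surjective_nat β
  choose f hf using forth
  choose g hg using back
  let step (n : ℕ) (l : {l // Coherent R l}) : {l // Coherent R l} :=
    ⟨_, hg _ (hf l.1 l.2 (a n)) (b n)⟩
  let L (n : ℕ) : {l // Coherent R l} := Nat.rec ⟨[], coherent_nil R⟩ step n
  have hL : Monotone fun n => {p | p ∈ (L n).1} :=
    monotone_nat_of_le_succ fun n p hp => List.mem_cons_of_mem _ (List.mem_cons_of_mem _ hp)
  refine ⟨⋃ n, {p | p ∈ (L n).1}, fun x => ?_, fun y => ?_, ?_⟩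
  · obtain ⟨n, rfl⟩ := ha x
    exact ⟨_, Set.mem_iUnion.2 ⟨n + 1, List.mem_cons_of_mem _ List.mem_cons_self⟩⟩
  · obtain ⟨n, rfl⟩ := hb y
    exact ⟨_, Set.mem_iUnion.2 ⟨n + 1, List.mem_cons_self⟩⟩
  · simp only [Set.mem_iUnion]
    rintro p ⟨n, hp⟩ q ⟨k, hq⟩
    exact (L (max n k)).2 p (hL (le_max_left n k) hp) q (hL (le_max_right n k) hq)

end BackAndForth

section QS

variable {S : Set ℝ}

theorem QS.ext {x y : QS S} (h : ∀ s, x.1 s = y.1 s) : x = y :=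
  Subtype.ext (funext h)

instance [Countable S] : Countable (QS S) :=
  Function.Injective.countable (f := fun x : QS S => Finsupp.ofSupportFinite x.1 x.2)
    fun x y h => Subtype.ext (by simpa [Finsupp.ofSupportFinite_coe] using congrArg (⇑) h)

instance : Nonempty (QS S) :=
  ⟨⟨0, by simp⟩⟩

noncomputable def QS.update (x : QS S) (s : S) (n : ℕ) : QS S :=
  ⟨Function.update x.1 s n, (x.2.insert s).subset fun t ht => by
    by_cases h : t = s <;> simp_all [Function.update]⟩

theorem finite_qdist_set (x y : QS S) : (Subtype.val '' {s : S | x.1 s ≠ y.1 s}).Finite := by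
  refine ((x.2.union y.2).subset fun s hs => ?_).image _
  by_contra hc
  simp_all

theorem qdist_self (x : QS S) : qdist S x x = 0 := by
  simp [qdist]

theorem qdist_comm (x y : QS S) : qdist S x y = qdist S y x := by
  simp only [qdist, ne_comm]

theorem le_qdist {x y : QS S} {s : S} (h : x.1 s ≠ y.1 s) : (s : ℝ) ≤ qdist S x y :=
  le_csSup (finite_qdist_set x y).bddAbove ⟨s, h, rfl⟩

theorem qdist_mem_image {x y : QS S} (h : x ≠ y) :
    qdist S x y ∈ Subtype.val '' {s : S | x.1 s ≠ y.1 s} := by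
  refine Set.Nonempty.csSup_mem ?_ (finite_qdist_set x y)
  obtain ⟨s, hs⟩ := not_forall.1 (mt QS.ext h)
  exact ⟨s, s, hs, rfl⟩

theorem qdist_mem {x y : QS S} (h : x ≠ y) : qdist S x y ∈ S := by
  obtain ⟨s, -, hs⟩ := qdist_mem_image h
  exact hs ▸ s.2

theorem qdist_le {x y : QS S} {r : ℝ} (hr : 0 ≤ r)
    (h : ∀ s : S, x.1 s ≠ y.1 s → (s : ℝ) ≤ r) : qdist S x y ≤ r := by
  rcases eq_or_ne x y with rfl | hne
  · rwa [qdist_self]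
  · obtain ⟨s, hs, -⟩ := qdist_mem_image hne
    exact csSup_le ⟨s, s, hs, rfl⟩ (by rintro _ ⟨s, hs, rfl⟩; exact h s hs)

variable (hpos : S ⊆ Set.Ioi 0)
include hpos

theorem qdist_nonneg (x y : QS S) : 0 ≤ qdist S x y := by
  rcases eq_or_ne x y with rfl | hne
  · rw [qdist_self]
  · exact (hpos (qdist_mem hne)).le

theorem eq_of_qdist_eq_zero {x y : QS S} (h : qdist S x y = 0) : x = y := by
  by_contra hne
  simpa [h] using hpos (qdist_mem hne)

theorem qdist_le_max (x y z : QS S) : qdist S x z ≤ max (qdist S x y) (qdist S y z) := by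
  refine qdist_le (le_max_of_le_left (qdist_nonneg hpos x y)) fun s hs => ?_
  rcases eq_or_ne (x.1 s) (y.1 s) with h | h
  · exact le_max_of_le_right (le_qdist (h ▸ hs))
  · exact le_max_of_le_left (le_qdist h)

/-- Not an instance: `qdist` is a metric only when `S ⊆ (0, ∞)`. -/
noncomputable abbrev qsMetric : MetricSpace (QS S) where
  dist := qdist S
  dist_self := qdist_self
  dist_comm := qdist_comm
  dist_triangle x y z := (qdist_le_max hpos x y z).trans <|
    max_le (le_add_of_nonneg_right (qdist_nonneg hpos y z))
      (le_add_of_nonneg_left (qdist_nonneg hpos x y))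
  eq_of_dist_eq_zero := eq_of_qdist_eq_zero hpos

theorem qdist_update_of_ne {x z : QS S} {s : S} {n : ℕ} (hn : z.1 s ≠ n) :
    qdist S (x.update s n) z = max (s : ℝ) (qdist S x z) := by
  have hs : (x.update s n).1 s ≠ z.1 s := by simpa [QS.update] using hn.symm
  have hs₀ : (0 : ℝ) ≤ s := (hpos s.2).le
  refine le_antisymm (qdist_le (hs₀.trans (le_max_left _ _)) fun t ht => ?_)
    (max_le (le_qdist hs) (qdist_le (hs₀.trans (le_qdist hs)) fun t ht => ?_))
  · rcases eq_or_ne t s with rfl | h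
    · exact le_max_left _ _
    · exact le_max_of_le_right (le_qdist (by simpa [QS.update, h] using ht))
  · rcases eq_or_ne t s with rfl | h
    · exact le_qdist hs
    · exact le_qdist (by simpa [QS.update, h] using ht)

end QS

theorem dist_eq_max_of_dist_le {X : Type*} [PseudoMetricSpace X] [IsUltrametricDist X]
    {x y z : X} (h : dist x y ≤ dist x z) : dist x z = max (dist x y) (dist y z) := by
  refine le_antisymm (dist_triangle_max x y z) (max_le h ?_)
  calc dist y z ≤ max (dist y x) (dist x z) := dist_triangle_max y x z
    _ = dist x z := by rw [dist_comm y x, max_eq_right h]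

section Extension

variable {S : Set ℝ} {M : Type*} [MetricSpace M]

def SameDist (S : Set ℝ) (p q : M × QS S) : Prop :=
  qdist S p.2 q.2 = dist p.1 q.1

theorem Coherent.cons_sameDist {l : List (M × QS S)} (hl : Coherent (SameDist S) l)
    {m : M} {x : QS S} (h : ∀ p ∈ l, qdist S x p.2 = dist m p.1) :
    Coherent (SameDist S) ((m, x) :: l) := by
  simp only [Coherent, List.mem_cons, forall_eq_or_imp, SameDist]
  refine ⟨⟨by simp [qdist_self], h⟩, fun p hp => ⟨by rw [qdist_comm, dist_comm]; exact h p hp, ?_⟩⟩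
  exact hl p hp

theorem Coherent.snd_eq_of_fst_eq (hpos : S ⊆ Set.Ioi 0) {l : List (M × QS S)}
    (hl : Coherent (SameDist S) l) {p q : M × QS S} (hp : p ∈ l) (hq : q ∈ l)
    (h : p.1 = q.1) : p.2 = q.2 :=
  eq_of_qdist_eq_zero hpos ((hl p hp q hq).trans (by rw [h, dist_self]))

theorem Coherent.exists_forth [IsUltrametricDist M] (hpos : S ⊆ Set.Ioi 0)
    (hdistS : ∀ x y : M, x ≠ y → dist x y ∈ S) {l : List (M × QS S)}
    (hl : Coherent (SameDist S) l) (m : M) : ∃ x, Coherent (SameDist S) ((m, x) :: l) := by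
  classical
  by_cases hdom : ∃ p ∈ l, p.1 = m
  · obtain ⟨p, hp, rfl⟩ := hdom
    exact ⟨p.2, hl.cons_sameDist fun q hq => hl p hp q hq⟩
  push Not at hdom
  rcases eq_or_ne l [] with rfl | hne
  · exact ⟨Classical.arbitrary _, hl.cons_sameDist (by simp)⟩
  obtain ⟨p₀, hp₀, hmin⟩ := l.toFinset.exists_min_image (fun p => dist m p.1)
    ((List.toFinset_nonempty_iff l).2 hne)
  simp only [List.mem_toFinset] at hp₀ hmin
  let s : S := ⟨dist m p₀.1, hdistS _ _ (hdom p₀ hp₀).symm⟩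
  obtain ⟨n, hn⟩ := Infinite.exists_notMem_finset ((l.map fun p => p.2.1 s).toFinset)
  refine ⟨p₀.2.update s n, hl.cons_sameDist fun p hp => ?_⟩
  have hpn : p.2.1 s ≠ n := fun h => hn (List.mem_toFinset.2 (List.mem_map.2 ⟨p, hp, h⟩))
  have h₀ : qdist S p₀.2 p.2 = dist p₀.1 p.1 := hl p₀ hp₀ p hp
  rw [qdist_update_of_ne hpos hpn, h₀, dist_eq_max_of_dist_le (hmin p hp)]

theorem exists_isometric_image [Nonempty M] (hpos : S ⊆ Set.Ioi 0)
    (huniv : ∀ (X : Type) [MetricSpace X] [Finite X],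
      (∀ a b c : X, dist a c ≤ max (dist a b) (dist b c)) →
      (∀ a b : X, a ≠ b → dist a b ∈ S) →
      ∃ e : X → M, ∀ a b : X, dist (e a) (e b) = dist a b)
    {T : Set (QS S)} (hT : T.Finite) :
    ∃ E : QS S → M, ∀ a ∈ T, ∀ b ∈ T, dist (E a) (E b) = qdist S a b := by
  let := qsMetric hpos
  have := hT.to_subtype
  obtain ⟨e, he⟩ := huniv T (fun a b c => qdist_le_max hpos a b c)
    fun a b h => qdist_mem (Subtype.coe_injective.ne h)
  classical
  refine ⟨fun z => if h : z ∈ T then e ⟨z, h⟩ else Classical.arbitrary M, fun a ha b hb => ?_⟩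
  simp only [dif_pos ha, dif_pos hb, he]
  rfl

theorem Coherent.exists_back [Nonempty M] (hpos : S ⊆ Set.Ioi 0)
    (huniv : ∀ (X : Type) [MetricSpace X] [Finite X],
      (∀ a b c : X, dist a c ≤ max (dist a b) (dist b c)) →
      (∀ a b : X, a ≠ b → dist a b ∈ S) →
      ∃ e : X → M, ∀ a b : X, dist (e a) (e b) = dist a b)
    (hhom : ∀ F : Set M, F.Finite → ∀ φ : F → M,
      (∀ a b : F, dist (φ a) (φ b) = dist a.1 b.1) →
      ∃ Φ : M ≃ M, (∀ x y : M, dist (Φ x) (Φ y) = dist x y) ∧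
        ∀ a : F, Φ a.1 = φ a)
    {l : List (M × QS S)} (hl : Coherent (SameDist S) l) (y : QS S) :
    ∃ m, Coherent (SameDist S) ((m, y) :: l) := by
  obtain ⟨E, hE⟩ := exists_isometric_image hpos huniv (y :: l.map Prod.snd).finite_toSet
  have hdom : ∀ x ∈ l.map Prod.fst, ∃ z, (x, z) ∈ l := by simp
  choose! f hf using hdom
  have hfT : ∀ x ∈ l.map Prod.fst, f x ∈ y :: l.map Prod.snd :=
    fun x hx => List.mem_cons_of_mem _ (List.mem_map_of_mem (f := Prod.snd) (hf x hx))
  obtain ⟨Φ, hΦ, hΦE⟩ := hhom {x | x ∈ l.map Prod.fst} (l.map Prod.fst).finite_toSet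
    (fun x => E (f x)) fun x x' => by
      rw [hE _ (hfT _ x.2) _ (hfT _ x'.2)]
      exact hl _ (hf _ x.2) _ (hf _ x'.2)
  refine ⟨Φ.symm (E y), hl.cons_sameDist fun p hp => ?_⟩
  have hp₁ : p.1 ∈ l.map Prod.fst := List.mem_map_of_mem hp
  have hfp : f p.1 = p.2 := hl.snd_eq_of_fst_eq hpos (hf _ hp₁) hp rfl
  calc qdist S y p.2 = dist (E y) (E (f p.1)) := by
        rw [hE _ List.mem_cons_self _ (hfT _ hp₁), hfp]
    _ = dist (Φ (Φ.symm (E y))) (Φ p.1) := by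
        rw [Equiv.apply_symm_apply, hΦE ⟨p.1, hp₁⟩]
    _ = dist (Φ.symm (E y)) p.1 := hΦ _ _

end Extension

/-- Uniqueness of the Urysohn space: any countable metric
space `M` which is ultrahomogeneous and whose finite subspaces are, up to
isometry, exactly the finite ultrametric spaces with nonzero distances in
`S`, is isometric to `Q_S`. -/
theorem stmt17 (S : Set ℝ) (hpos : S ⊆ Set.Ioi 0) (hcount : S.Countable)
    (M : Type*) [MetricSpace M] [Countable M]
    (hult : ∀ x y z : M, dist x z ≤ max (dist x y) (dist y z))
    (hdistS : ∀ x y : M, x ≠ y → dist x y ∈ S)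
    (huniv : ∀ (X : Type) [MetricSpace X] [Finite X],
      (∀ a b c : X, dist a c ≤ max (dist a b) (dist b c)) →
      (∀ a b : X, a ≠ b → dist a b ∈ S) →
      ∃ e : X → M, ∀ a b : X, dist (e a) (e b) = dist a b)
    (hhom : ∀ F : Set M, F.Finite → ∀ φ : F → M,
      (∀ a b : F, dist (φ a) (φ b) = dist a.1 b.1) →
      ∃ Φ : M ≃ M, (∀ x y : M, dist (Φ x) (Φ y) = dist x y) ∧
        ∀ a : F, Φ a.1 = φ a) :
    ∃ g : M → QS S, Function.Bijective g ∧
      ∀ x y : M, qdist S (g x) (g y) = dist x y := by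
  have : IsUltrametricDist M := ⟨hult⟩
  have : Countable S := hcount.to_subtype
  have : Nonempty M := by
    obtain ⟨e, -⟩ := huniv PUnit (by simp) (by simp)
    exact ⟨e PUnit.unit⟩
  obtain ⟨G, hfst, hsnd, hG⟩ := exists_coherent_of_back_and_forth (SameDist S)
    (fun _ hl m => hl.exists_forth hpos hdistS m) (fun _ hl y => hl.exists_back hpos huniv hhom y)
  choose g hg using hfst
  have hiso : ∀ x y, qdist S (g x) (g y) = dist x y := fun x y => hG _ (hg x) _ (hg y)
  refine ⟨g, ⟨fun x y h => dist_eq_zero.1 ?_, fun y => ?_⟩, hiso⟩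
  · rw [← hiso, h, qdist_self]
  · obtain ⟨x, hx⟩ := hsnd y
    exact ⟨x, eq_of_qdist_eq_zero hpos ((hG _ (hg x) _ hx).trans (dist_self x))⟩
end
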